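/- Let A be a Noetherian ring, M a finitely generated A-module, and I an ideal of A admitting a principal reduction generated by an A-regular element: i.e., there exist an A-regular element y ∈ I and n_0 ≥ 1 with I^{n+1} = yI^n for all n ≥ n_0. Then Tor_i^A(M, A/I^n) ≅ Tor_i^A(M, A/I^{n_0}) for all i ≥ 2 and n ≥ n_0. -/

import Mathlib

open CategoryTheory

universe u

/-!
A projective resolution of an ideal `J`, augmented by the free module `A`, resolves `A ⧸ J`; this
dimension shifting gives `Tor_i(M, A ⧸ J) ≅ Tor_{i-1}(M, J)` for `i ≥ 2`. Multiplication by the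
non-zero-divisor `y` is an isomorphism of `A`-modules `Iⁿ ≅ y·Iⁿ = Iⁿ⁺¹` for `n ≥ n₀`, hence
`Tor_i(M, A ⧸ Iⁿ⁺¹) ≅ Tor_{i-1}(M, Iⁿ⁺¹) ≅ Tor_{i-1}(M, Iⁿ) ≅ Tor_i(M, A ⧸ Iⁿ)`.
-/

namespace CategoryTheory.ProjectiveResolution

open Limits

variable {C : Type*} [Category C] [Abelian C]

section

variable {Z : C} (P : ProjectiveResolution Z)

noncomputable def augmentation : P.complex.X 0 ⟶ Z :=
  (ChainComplex.toSingle₀Equiv _ _ P.π).1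

lemma d_comp_augmentation : P.complex.d 1 0 ≫ P.augmentation = 0 :=
  (ChainComplex.toSingle₀Equiv _ _ P.π).2

lemma d_comp_augmentation_assoc {Z' : C} (f : Z ⟶ Z') :
    P.complex.d 1 0 ≫ P.augmentation ≫ f = 0 := by
  rw [← Category.assoc, d_comp_augmentation, zero_comp]

instance : Epi P.augmentation := inferInstanceAs (Epi (P.π.f 0))

lemma exact_augmentation : (ShortComplex.mk _ _ P.d_comp_augmentation).Exact :=
  P.exact₀

end

variable {S : ShortComplex C} (P : ProjectiveResolution S.X₁)

lemma exact_d_augmentation_comp_f [Mono S.f] :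
    (ShortComplex.mk (P.complex.d 1 0) (P.augmentation ≫ S.f)
      (P.d_comp_augmentation_assoc S.f)).Exact :=
  (ShortComplex.exact_iff_of_epi_of_isIso_of_mono
    (S₁ := ShortComplex.mk _ _ P.d_comp_augmentation)
    (S₂ := ShortComplex.mk (P.complex.d 1 0) (P.augmentation ≫ S.f)
      (P.d_comp_augmentation_assoc S.f))
    { τ₁ := 𝟙 _, τ₂ := 𝟙 _, τ₃ := S.f }).1 P.exact_augmentation

lemma exact_augmentation_comp_f_g (hS : S.Exact) :
    (ShortComplex.mk (P.augmentation ≫ S.f) S.g (by simp)).Exact :=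
  (ShortComplex.exact_iff_of_epi_of_isIso_of_mono
    (S₁ := ShortComplex.mk _ _ _) (S₂ := S)
    { τ₁ := P.augmentation, τ₂ := 𝟙 _, τ₃ := 𝟙 _ }).2 hS

noncomputable def ofShortExact (hS : S.ShortExact) [Projective S.X₂] :
    ProjectiveResolution S.X₃ where
  complex := P.complex.augment (P.augmentation ≫ S.f) (P.d_comp_augmentation_assoc S.f)
  projective
    | 0 => ‹Projective S.X₂›
    | n + 1 => P.projective n
  π := (ChainComplex.toSingle₀Equiv _ _).symm ⟨S.g, show (P.augmentation ≫ S.f) ≫ S.g = 0 by simp⟩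
  quasiIso := ⟨fun n => by
    cases n with
    | zero =>
      rw [ChainComplex.quasiIsoAt₀_iff, ShortComplex.quasiIso_iff_of_zeros']
      · refine (ShortComplex.exact_and_epi_g_iff_of_iso
          (S₁ := ShortComplex.mk (P.augmentation ≫ S.f) S.g (by simp)) ?_).1
          ⟨P.exact_augmentation_comp_f_g hS.exact, hS.epi_g⟩
        refine ShortComplex.isoMk (Iso.refl _) (Iso.refl _) (Iso.refl _)
          ((Category.id_comp _).trans (Category.comp_id _).symm) ?_
        -- `simp` fails here: the two sides live in types that agree only up to unfolding
        exact (Category.id_comp _).trans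
          ((ChainComplex.toSingle₀Equiv_symm_apply_f_zero _ _).trans (Category.comp_id _).symm)
      all_goals rfl
    | succ n =>
      rw [quasiIsoAt_iff_exactAt' _ _ (ChainComplex.exactAt_succ_single_obj _ _),
        HomologicalComplex.exactAt_iff' _ (n + 2) (n + 1) n (by simp) (by simp)]
      cases n with
      | zero =>
        have := hS.mono_f
        exact P.exact_d_augmentation_comp_f
      | succ n => exact P.exact_succ n⟩

end CategoryTheory.ProjectiveResolution

namespace CategoryTheory

variable {C D : Type*} [Category C] [Abelian C] [HasProjectiveResolutions C]
  [Category D] [Abelian D]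

noncomputable def Functor.leftDerivedObjIsoOfShortExact (F : C ⥤ D) [F.Additive]
    {S : ShortComplex C} (hS : S.ShortExact) [Projective S.X₂] (n : ℕ) :
    (F.leftDerived (n + 2)).obj S.X₃ ≅ (F.leftDerived (n + 1)).obj S.X₁ :=
  let P := projectiveResolution S.X₁
  -- in degrees `≥ 2` the complex of `P.ofShortExact hS` is `P.complex` shifted by one, on the nose
  let K := (F.mapHomologicalComplex _).obj P.complex
  let L := (F.mapHomologicalComplex _).obj (P.ofShortExact hS).complex
  (P.ofShortExact hS).isoLeftDerivedObj F (n + 2) ≪≫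
    L.homologyIsoSc' (n + 3) (n + 2) (n + 1) (by simp) (by simp) ≪≫
    (K.homologyIsoSc' (n + 2) (n + 1) n (by simp) (by simp)).symm ≪≫
    (P.isoLeftDerivedObj F (n + 1)).symm

end CategoryTheory

section Ideals

variable {A : Type u} [CommRing A]

noncomputable def Ideal.mulLeftEquiv {y : A} (hy : IsLeftRegular y) (J : Ideal A) :
    J ≃ₗ[A] ↥(Ideal.span {y} * J) :=
  (Submodule.equivMapOfInjective (LinearMap.mulLeft A y) hy J).trans
    (LinearEquiv.ofEq _ _ (by ext x; simp [Ideal.mem_span_singleton_mul]))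

abbrev Ideal.shortComplex (J : Ideal A) : ShortComplex (ModuleCat.{u} A) :=
  ModuleCat.shortComplexOfCompEqZero J.subtype J.mkQ
    (LinearMap.exact_subtype_mkQ J).linearMap_comp_eq_zero

lemma Ideal.shortExact_shortComplex (J : Ideal A) : J.shortComplex.ShortExact :=
  ModuleCat.shortComplex_shortExact _ (LinearMap.exact_subtype_mkQ J) J.injective_subtype
    J.mkQ_surjective

variable {D : Type*} [Category D] [Abelian D] (F : ModuleCat.{u} A ⥤ D) [F.Additive]

noncomputable def CategoryTheory.Functor.leftDerivedObjQuotientIso (J : Ideal A) (n : ℕ) :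
    (F.leftDerived (n + 2)).obj (ModuleCat.of A (A ⧸ J)) ≅
      (F.leftDerived (n + 1)).obj (ModuleCat.of A J) :=
  F.leftDerivedObjIsoOfShortExact J.shortExact_shortComplex n

noncomputable def CategoryTheory.Functor.leftDerivedObjQuotientIsoOfLinearEquiv {J J' : Ideal A}
    (e : J ≃ₗ[A] J') (n : ℕ) :
    (F.leftDerived (n + 2)).obj (ModuleCat.of A (A ⧸ J)) ≅
      (F.leftDerived (n + 2)).obj (ModuleCat.of A (A ⧸ J')) :=
  F.leftDerivedObjQuotientIso J n ≪≫ (F.leftDerived (n + 1)).mapIso e.toModuleIso ≪≫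
    (F.leftDerivedObjQuotientIso J' n).symm

end Ideals

theorem tor_stable_of_principal_reduction_general (A : Type u) [CommRing A]
    (M : Type u) [AddCommGroup M] [Module A M]
    (I : Ideal A) (y : A) (hy : y ∈ nonZeroDivisors A)
    (n₀ : ℕ) (hred : ∀ n ≥ n₀, I ^ (n + 1) = Ideal.span {y} * I ^ n) :
    ∀ i : ℕ, 2 ≤ i → ∀ n ≥ n₀,
      Nonempty ((((Tor (ModuleCat.{u} A) i).obj (ModuleCat.of A M)).obj
          (ModuleCat.of A (A ⧸ I ^ n))) ≅
        (((Tor (ModuleCat.{u} A) i).obj (ModuleCat.of A M)).obj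
          (ModuleCat.of A (A ⧸ I ^ n₀)))) := by
  intro i hi n hn
  obtain ⟨j, rfl⟩ : ∃ j, i = j + 2 := ⟨i - 2, by omega⟩
  have hyReg : IsLeftRegular y := (isRegular_iff_mem_nonZeroDivisors.2 hy).left
  let F := (MonoidalCategory.tensoringLeft _).obj (ModuleCat.of A M)
  induction n, hn using Nat.le_induction with
  | base => exact ⟨Iso.refl _⟩
  | succ n hn ih =>
    let eIdeal : ↥(I ^ n) ≃ₗ[A] ↥(I ^ (n + 1)) :=
      (Ideal.mulLeftEquiv hyReg (I ^ n)).trans (LinearEquiv.ofEq _ _ (hred n hn).symm)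
    exact ih.map (F.leftDerivedObjQuotientIsoOfLinearEquiv eIdeal.symm j ≪≫ ·)

/-- **Stability of `Tor_i(M, A/Iⁿ)` for ideals with a principal reduction.**
Let `A` be a Noetherian ring, `M` a finitely generated `A`-module, and `I` an ideal admitting a
principal reduction generated by an `A`-regular element: there exist a non-zerodivisor `y ∈ I`
and `n₀ ≥ 1` with `I^{n+1} = y·Iⁿ` for all `n ≥ n₀`. Then
`Tor_i^A(M, A/Iⁿ) ≅ Tor_i^A(M, A/I^{n₀})` for all `i ≥ 2` and `n ≥ n₀`. -/
theorem tor_stable_of_principal_reduction (A : Type u) [CommRing A] [IsNoetherianRing A]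
    (M : Type u) [AddCommGroup M] [Module A M] [Module.Finite A M]
    (I : Ideal A) (y : A) (hyI : y ∈ I) (hy : y ∈ nonZeroDivisors A)
    (n₀ : ℕ) (hn₀ : 1 ≤ n₀) (hred : ∀ n ≥ n₀, I ^ (n + 1) = Ideal.span {y} * I ^ n) :
    ∀ i : ℕ, 2 ≤ i → ∀ n ≥ n₀,
      Nonempty ((((Tor (ModuleCat.{u} A) i).obj (ModuleCat.of A M)).obj
          (ModuleCat.of A (A ⧸ I ^ n))) ≅
        (((Tor (ModuleCat.{u} A) i).obj (ModuleCat.of A M)).obj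
          (ModuleCat.of A (A ⧸ I ^ n₀)))) :=
  tor_stable_of_principal_reduction_general A M I y hy n₀ hred
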